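/- The cross Hessian block of the log-likelihood between two distinct component parameter vectors θ_k and θ_h (k ≠ h) equals − Σ_{i=1}^I α_{ki} α_{hi} c_{ki} c_{hi}', where c_{ki} = (b_{ki}', −(1/2)(G' vec(Σ_k^{-1} − b_{ki}b_{ki}'))')'. -/

import Mathlib

open Matrix MeasureTheory
open scoped BigOperators Kronecker

noncomputable section

/-- Density of the multivariate Gaussian distribution `N(μ, S)` evaluated at `y`. -/
def gpdf {n : Type*} [Fintype n] [DecidableEq n] (y μ : n → ℝ) (S : Matrix n n ℝ) : ℝ :=
  (2 * Real.pi) ^ (-(Fintype.card n : ℝ) / 2) * S.det ^ (-(1 : ℝ) / 2) *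
    Real.exp (-(1 / 2) * ((y - μ) ⬝ᵥ (S⁻¹ *ᵥ (y - μ))))

/-- Index type for the half-vectorization of a `D × D` matrix. -/
abbrev lowIdx (D : ℕ) := {p : Fin D × Fin D // p.2 ≤ p.1}

/-- Half-vectorization `v(M)` of a square matrix. -/
def vech {D : ℕ} (M : Matrix (Fin D) (Fin D) ℝ) : lowIdx D → ℝ := fun p => M p.1.1 p.1.2

/-- Vectorization `vec(M)` of a square matrix (indexed by pairs). -/
def vecM {D : ℕ} (M : Matrix (Fin D) (Fin D) ℝ) : Fin D × Fin D → ℝ := fun q => M q.1 q.2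

/-- The duplication matrix `G`, satisfying `vec S = G *ᵥ vech S` for symmetric `S`. -/
def dup (D : ℕ) : Matrix (Fin D × Fin D) (lowIdx D) ℝ :=
  Matrix.of fun q p =>
    if (q.1 = p.1.1 ∧ q.2 = p.1.2) ∨ (q.1 = p.1.2 ∧ q.2 = p.1.1) then (1 : ℝ) else 0

/-- The symmetric matrix with prescribed half-vectorization. -/
def unvech {D : ℕ} (v : lowIdx D → ℝ) : Matrix (Fin D) (Fin D) ℝ :=
  Matrix.of fun i j => if h : j ≤ i then v ⟨(i, j), h⟩ else v ⟨(j, i), le_of_not_ge h⟩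

/-- The matrix `b' ⊗ A` (of size `D × D²`), acting on vectorized matrices by
`(kronRow b A) *ᵥ vec S = A * Sᵀ * b`. -/
def kronRow {D : ℕ} (b : Fin D → ℝ) (A : Matrix (Fin D) (Fin D) ℝ) :
    Matrix (Fin D) (Fin D × Fin D) ℝ :=
  Matrix.of fun i q => b q.1 * A i q.2

/-- The continuous linear map `v ↦ g ⬝ᵥ v`. -/
def dotCLM {n : ℕ} (g : Fin n → ℝ) : (Fin n → ℝ) →L[ℝ] ℝ :=
  ∑ j, g j • ContinuousLinearMap.proj j

/-- Full weight vector of a `K+1`-component mixture with free parameters `p`. -/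
def piFull {K : ℕ} (p : Fin K → ℝ) : Fin (K + 1) → ℝ :=
  fun k => if h : (k : ℕ) < K then p ⟨k, h⟩ else 1 - ∑ j, p j

/-- The vectors `a_k`: `(1/π_k) e_k` for `k < K` and `-(1/π_K) 1` for `k = K`. -/
def avec {K : ℕ} (p : Fin K → ℝ) (k : Fin (K + 1)) : Fin K → ℝ :=
  if h : (k : ℕ) < K then (fun j => if j = (⟨k, h⟩ : Fin K) then (p ⟨k, h⟩)⁻¹ else 0)
  else fun _ => -(1 - ∑ j, p j)⁻¹

/-!
Only the `k`-th summand of the mixture density moves with `s` and only the `h`-th with `t`, so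
for each observation the mixed partial of `log (F s + G t + C)` is `-F' G' / (F + G + C)²`,
and `w_k f_k / (F + G + C)` is `α_k`. Along `(μ, Σ) + s (d, V)` a Gaussian density has derivative
`f · (b'd - ½ tr (Σ⁻¹V) + ½ b'Vb)`, by `d det = det · tr (Σ⁻¹ V)` and `dΣ⁻¹ = -Σ⁻¹ V Σ⁻¹`;
the duplication matrix rewrites this score as `c'(d, v(V))`.
-/

open Function

theorem Matrix.IsSymm.mulVec_dotProduct {n R : Type*} [Fintype n] [CommSemiring R]
    {A : Matrix n n R} (hA : A.IsSymm) (x y : n → R) : (A *ᵥ x) ⬝ᵥ y = x ⬝ᵥ (A *ᵥ y) := by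
  rw [dotProduct_comm, dotProduct_mulVec, ← mulVec_transpose, hA.eq, dotProduct_comm]

theorem dotProduct_mulVec_eq_trace {n R : Type*} [Fintype n] [CommSemiring R]
    (A : Matrix n n R) (u : n → R) :
    u ⬝ᵥ (A *ᵥ u) = (A * vecMulVec u u).trace := by
  rw [mul_vecMulVec, trace_vecMulVec, dotProduct_comm]

section LineDerivatives

attribute [local instance] Matrix.linftyOpNormedRing Matrix.linftyOpNormedAlgebra

variable {n 𝕜 : Type*} [Fintype n] [DecidableEq n] [NontriviallyNormedField 𝕜]

open Polynomial in
theorem hasDerivAt_det_add_smul (M V : Matrix n n 𝕜) (hM : IsUnit M.det) :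
    HasDerivAt (fun s : 𝕜 => (M + s • V).det) (M.det * (M⁻¹ * V).trace) 0 := by
  -- the remainder in `det (1 + s A) = 1 + s tr A + q(s) s²`
  set q : 𝕜[X] := (det (1 + (X : 𝕜[X]) • (M⁻¹ * V).map C)).divX.divX
  have hexpand : ∀ s : 𝕜, (M + s • V).det
      = M.det * (1 + (M⁻¹ * V).trace * s + q.eval s * s ^ 2) := by
    intro s
    rw [← det_one_add_smul, ← det_mul, Matrix.mul_add, Matrix.mul_one, Matrix.mul_smul,
      mul_nonsing_inv_cancel_left _ _ hM]
  have hpoly : HasDerivAt (fun s : 𝕜 => 1 + (M⁻¹ * V).trace * s + q.eval s * s ^ 2)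
      ((M⁻¹ * V).trace) 0 :=
    ((((hasDerivAt_id (0 : 𝕜)).const_mul (M⁻¹ * V).trace).const_add 1).add
      ((q.hasDerivAt 0).mul (hasDerivAt_pow 2 (0 : 𝕜)))).congr_deriv (by simp)
  simp only [hexpand]
  exact hpoly.const_mul M.det

theorem hasDerivAt_inv_add_smul (M V : Matrix n n ℝ) (hM : IsUnit M.det) :
    HasDerivAt (fun s : ℝ => (M + s • V)⁻¹) (-(M⁻¹ * V * M⁻¹)) 0 := by
  have hu : IsUnit M := (isUnit_iff_isUnit_det M).mpr hM
  have := (hasFDerivAt_ringInverse (𝕜 := ℝ) hu.unit).comp_hasDerivAt_of_eq (0 : ℝ)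
    (((hasDerivAt_id (0 : ℝ)).smul_const V).const_add M) (by simp)
  simp only [Function.comp_def, id, one_smul, ← nonsing_inv_eq_ringInverse, coe_units_inv,
    IsUnit.unit_spec] at this
  -- `this` is about the operator-norm structure, the goal about the product topology on
  -- matrices; the two agree definitionally
  exact this

omit [DecidableEq n] in
theorem hasDerivAt_vecMulVec_sub_smul (e d : n → 𝕜) :
    HasDerivAt (fun s : 𝕜 => vecMulVec (e - s • d) (e - s • d))
      (-(vecMulVec d e + vecMulVec e d)) 0 := by
  classical
  have hexpand : ∀ s : 𝕜, vecMulVec (e - s • d) (e - s • d) =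
      vecMulVec e e - s • (vecMulVec d e + vecMulVec e d) + s ^ 2 • vecMulVec d d := by
    intro s
    ext i j
    simp only [vecMulVec_apply, Matrix.sub_apply, Matrix.add_apply, Matrix.smul_apply,
      Pi.sub_apply, Pi.smul_apply, smul_eq_mul]
    ring
  have := (((hasDerivAt_id (0 : 𝕜)).smul_const (vecMulVec d e + vecMulVec e d)).const_sub
    (vecMulVec e e)).add ((hasDerivAt_pow 2 (0 : 𝕜)).smul_const (vecMulVec d d))
  simp only [hexpand]
  exact this.congr_deriv (by simp)

theorem hasDerivAt_quadForm_inv_add_smul (e d : n → ℝ) (M V : Matrix n n ℝ) (hM : M.IsSymm)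
    (hdet : IsUnit M.det) :
    HasDerivAt (fun s : ℝ => (e - s • d) ⬝ᵥ ((M + s • V)⁻¹ *ᵥ (e - s • d)))
      (-(2 * ((M⁻¹ *ᵥ e) ⬝ᵥ d) + (M⁻¹ *ᵥ e) ⬝ᵥ (V *ᵥ (M⁻¹ *ᵥ e)))) 0 := by
  let T : Matrix n n ℝ →L[ℝ] ℝ := LinearMap.toContinuousLinearMap (traceLinearMap n ℝ ℝ)
  have hsymm : M⁻¹.IsSymm := hM.inv
  have hprod := (hasDerivAt_inv_add_smul M V hdet).mul (hasDerivAt_vecMulVec_sub_smul e d)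
  simp only [dotProduct_mulVec_eq_trace]
  refine (T.hasFDerivAt.comp_hasDerivAt (0 : ℝ) hprod).congr_deriv ?_
  change trace _ = _
  simp only [zero_smul, sub_zero, add_zero, mul_neg, mul_add, trace_add, trace_neg,
    mul_vecMulVec, trace_vecMulVec, neg_mulVec, neg_dotProduct, ← mulVec_mulVec]
  rw [hsymm.mulVec_dotProduct, hsymm.mulVec_dotProduct d, dotProduct_comm d]
  ring

end LineDerivatives

theorem gpdf_pos {n : Type*} [Fintype n] [DecidableEq n] (y μ : n → ℝ) {M : Matrix n n ℝ}
    (hM : 0 < M.det) : 0 < gpdf y μ M := by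
  unfold gpdf
  have := Real.pi_pos
  positivity

theorem hasDerivAt_gpdf_add_smul {n : Type*} [Fintype n] [DecidableEq n] (y μ d : n → ℝ)
    (M V : Matrix n n ℝ) (hM : M.IsSymm) (hdet : M.det ≠ 0) :
    HasDerivAt (fun s : ℝ => gpdf y (μ + s • d) (M + s • V))
      (gpdf y μ M * ((M⁻¹ *ᵥ (y - μ)) ⬝ᵥ d - 1 / 2 * (M⁻¹ * V).trace
        + 1 / 2 * ((M⁻¹ *ᵥ (y - μ)) ⬝ᵥ (V *ᵥ (M⁻¹ *ᵥ (y - μ)))))) 0 := by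
  have hpow := (hasDerivAt_det_add_smul M V (isUnit_iff_ne_zero.mpr hdet)).rpow_const
    (p := -(1 : ℝ) / 2) (Or.inl (by simpa using hdet))
  have hexp := ((hasDerivAt_quadForm_inv_add_smul (y - μ) d M V hM
    (isUnit_iff_ne_zero.mpr hdet)).const_mul (-(1 / 2 : ℝ))).exp
  have hprod := (hpow.const_mul ((2 * Real.pi) ^ (-(Fintype.card n : ℝ) / 2))).mul hexp
  have hfun : (fun s : ℝ => gpdf y (μ + s • d) (M + s • V)) = fun s =>
      (2 * Real.pi) ^ (-(Fintype.card n : ℝ) / 2) * (M + s • V).det ^ (-(1 : ℝ) / 2) *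
        Real.exp (-(1 / 2) * ((y - μ - s • d) ⬝ᵥ ((M + s • V)⁻¹ *ᵥ (y - μ - s • d)))) := by
    funext s
    rw [gpdf, sub_add_eq_sub_sub]
  rw [hfun]
  refine hprod.congr_deriv ?_
  simp only [zero_smul, add_zero, sub_zero, gpdf, Real.rpow_sub_one hdet]
  field_simp
  ring

theorem sum_comp_update_update {ι α β M : Type*} [Fintype ι] [DecidableEq ι] [AddCommGroup M]
    (φ : ι → α → β → M) (f : ι → α) (g : ι → β) {k h : ι} (hkh : k ≠ h) (a a' : α)
    (b b' : β) :
    ∑ j, φ j (update (update f k a) h a' j) (update (update g k b) h b' j) =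
      φ k a b + φ h a' b' + (∑ j, φ j (f j) (g j) - φ k (f k) (g k) - φ h (f h) (g h)) := by
  have hpoint : ∀ j, φ j (update (update f k a) h a' j) (update (update g k b) h b' j) =
      φ j (f j) (g j) + (if j = k then φ k a b - φ k (f k) (g k) else 0)
        + (if j = h then φ h a' b' - φ h (f h) (g h) else 0) := by
    intro j
    by_cases hjh : j = h
    · subst hjh; simp [Ne.symm hkh]
    by_cases hjk : j = k
    · subst hjk; simp [hkh]
    simp [hjh, hjk]
  simp only [hpoint, Finset.sum_add_distrib, Finset.sum_ite_eq', Finset.mem_univ, if_true]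
  abel

theorem deriv_deriv_sum_log_add {ι : Type*} [Fintype ι] {F G : ι → ℝ → ℝ} {F' G' C : ι → ℝ}
    {a b : ℝ} (hF : ∀ i, HasDerivAt (F i) (F' i) a) (hG : ∀ i, HasDerivAt (G i) (G' i) b)
    (hne : ∀ i, F i a + G i b + C i ≠ 0) :
    deriv (fun t => deriv (fun s => ∑ i, Real.log (F i s + G i t + C i)) a) b =
      -∑ i, F' i * G' i / (F i a + G i b + C i) ^ 2 := by
  have hden : ∀ i, HasDerivAt (fun t => F i a + G i t + C i) (G' i) b := fun i =>
    ((hG i).const_add (F i a)).add_const (C i)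
  have hinner : (fun t => deriv (fun s => ∑ i, Real.log (F i s + G i t + C i)) a) =ᶠ[nhds b]
      fun t => ∑ i, F' i / (F i a + G i t + C i) := by
    have hev : ∀ᶠ t in nhds b, ∀ i, F i a + G i t + C i ≠ 0 :=
      Filter.eventually_all.mpr fun i => (hden i).continuousAt.eventually_ne (hne i)
    filter_upwards [hev] with t ht
    exact (HasDerivAt.fun_sum fun i _ =>
      (((hF i).add_const (G i t)).add_const (C i)).log (ht i)).deriv
  rw [hinner.deriv_eq]
  refine (HasDerivAt.fun_sum fun i _ =>
    (hasDerivAt_const b (F' i)).div (hden i) (hne i)).deriv.trans ?_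
  rw [← Finset.sum_neg_distrib]
  congr 1
  funext i
  ring

theorem unvech_isSymm {D : ℕ} (v : lowIdx D → ℝ) : (unvech v).IsSymm := by
  refine IsSymm.ext fun i j => ?_
  simp only [unvech, of_apply]
  split_ifs with h₁ h₂ h₂
  · obtain rfl := le_antisymm h₁ h₂
    rfl
  all_goals first | rfl | exact absurd (le_of_not_ge h₁) h₂

theorem dup_mulVec {D : ℕ} (v : lowIdx D → ℝ) : dup D *ᵥ v = vecM (unvech v) := by
  ext ⟨i, j⟩
  -- row `(i, j)` of `dup D` is the indicator of the lower-triangular position of `{i, j}`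
  have hrow : ∀ (p₀ : lowIdx D), (p₀.1 = (i, j) ∨ p₀.1 = (j, i)) → ∀ p : lowIdx D,
      ((i = p.1.1 ∧ j = p.1.2) ∨ (i = p.1.2 ∧ j = p.1.1)) ↔ p = p₀ := by
    rintro ⟨⟨a, c⟩, hca⟩ hp₀ ⟨⟨a', c'⟩, hca'⟩
    simp only [Subtype.mk.injEq, Prod.mk.injEq, Fin.ext_iff, Fin.le_iff_val_le_val]
      at hp₀ hca hca' ⊢
    omega
  simp only [mulVec, dotProduct, dup, of_apply, vecM, unvech, ite_mul, one_mul, zero_mul]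
  split_ifs with hji
  · simp only [hrow ⟨(i, j), hji⟩ (Or.inl rfl), Finset.sum_ite_eq', Finset.mem_univ, if_true]
  · simp only [hrow ⟨(j, i), le_of_not_ge hji⟩ (Or.inr rfl), Finset.sum_ite_eq',
      Finset.mem_univ, if_true]

theorem vecM_dotProduct_vecM {D : ℕ} (W : Matrix (Fin D) (Fin D) ℝ)
    {U : Matrix (Fin D) (Fin D) ℝ} (hU : U.IsSymm) : vecM W ⬝ᵥ vecM U = (W * U).trace := by
  simp only [dotProduct, vecM, Fintype.sum_prod_type, trace, Matrix.diag_apply, mul_apply,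
    hU.apply]

theorem sumElim_dotProduct_sumElim_dup {D : ℕ} (A : Matrix (Fin D) (Fin D) ℝ)
    (u d : Fin D → ℝ) (v : lowIdx D → ℝ) :
    Sum.elim u (fun q => (-(1 / 2 : ℝ)) *
        (((dup D)ᵀ *ᵥ vecM (A - vecMulVec u u)) q)) ⬝ᵥ Sum.elim d v =
      u ⬝ᵥ d - 1 / 2 * (A * unvech v).trace + 1 / 2 * (u ⬝ᵥ (unvech v *ᵥ u)) := by
  have hsymm := unvech_isSymm v
  have hquad : (vecMulVec u u * unvech v).trace = u ⬝ᵥ (unvech v *ᵥ u) := by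
    rw [vecMulVec_mul, trace_vecMulVec, ← vecMul_transpose, hsymm.eq]
  change Sum.elim u ((-(1 / 2 : ℝ)) • ((dup D)ᵀ *ᵥ vecM (A - vecMulVec u u))) ⬝ᵥ _ = _
  rw [sumElim_dotProduct_sumElim, smul_dotProduct, mulVec_transpose, ← dotProduct_mulVec,
    dup_mulVec, vecM_dotProduct_vecM _ hsymm, Matrix.sub_mul, trace_sub, hquad, smul_eq_mul]
  ring

theorem stmt_12_general (D P K I : ℕ) (w : Fin K → ℝ) (hw : ∀ k', 0 < w k')
    (lam : Fin K → Fin D → ℝ) (S : Fin K → Matrix (Fin D) (Fin D) ℝ)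
    (hS : ∀ k', (S k').PosDef)
    (β : Fin P → ℝ) (X : Fin I → Matrix (Fin P) (Fin D) ℝ) (y : Fin I → Fin D → ℝ)
    (k h : Fin K) (hkh : k ≠ h)
    (α : Fin K → Fin I → ℝ)
    (hα : ∀ k' i, α k' i =
      w k' * gpdf (y i) (lam k' + (X i)ᵀ *ᵥ β) (S k') /
        ∑ l, w l * gpdf (y i) (lam l + (X i)ᵀ *ᵥ β) (S l))
    (b : Fin K → Fin I → Fin D → ℝ)
    (hb : ∀ k' i, b k' i = (S k')⁻¹ *ᵥ (y i - (lam k' + (X i)ᵀ *ᵥ β)))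
    (c : Fin K → Fin I → (Fin D ⊕ lowIdx D) → ℝ)
    (hc : ∀ k' i, c k' i = Sum.elim (b k' i)
      (fun q => (-(1 / 2 : ℝ)) *
        (((dup D)ᵀ *ᵥ vecM ((S k')⁻¹ - vecMulVec (b k' i) (b k' i))) q)))
    (dlk dlh : Fin D → ℝ) (dvk dvh : lowIdx D → ℝ) :
    deriv (fun t : ℝ => deriv (fun s : ℝ =>
      ∑ i, Real.log (∑ k', w k' * gpdf (y i)
        ((Function.update (Function.update lam k (lam k + s • dlk)) h
            (lam h + t • dlh)) k' + (X i)ᵀ *ᵥ β)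
        ((Function.update (Function.update S k (S k + s • unvech dvk)) h
            (S h + t • unvech dvh)) k'))) 0) 0 =
      -(∑ i, α k i * α h i *
        ((c k i ⬝ᵥ Sum.elim dlk dvk) * (c h i ⬝ᵥ Sum.elim dlh dvh))) := by
  set μ : Fin K → Fin I → Fin D → ℝ := fun l i => lam l + (X i)ᵀ *ᵥ β with hμ
  set m : Fin I → ℝ := fun i => ∑ l, w l * gpdf (y i) (μ l i) (S l) with hm
  have hm_pos : ∀ i, 0 < m i := fun i => Finset.sum_pos
    (fun l _ => mul_pos (hw l) (gpdf_pos _ _ (hS l).det_pos)) ⟨k, Finset.mem_univ k⟩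
  have hgpdf := fun (l : Fin K) (i : Fin I) (d : Fin D → ℝ) (V : Matrix (Fin D) (Fin D) ℝ) =>
    (hasDerivAt_gpdf_add_smul (y i) (μ l i) d (S l) V
      (isHermitian_iff_isSymm.mp (hS l).isHermitian) (hS l).det_pos.ne').const_mul (w l)
  have hsplit : ∀ i (s t : ℝ), ∑ k', w k' * gpdf (y i)
      ((update (update lam k (lam k + s • dlk)) h (lam h + t • dlh)) k' + (X i)ᵀ *ᵥ β)
      ((update (update S k (S k + s • unvech dvk)) h (S h + t • unvech dvh)) k') =
      w k * gpdf (y i) (μ k i + s • dlk) (S k + s • unvech dvk)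
        + w h * gpdf (y i) (μ h i + t • dlh) (S h + t • unvech dvh)
        + (m i - w k * gpdf (y i) (μ k i) (S k) - w h * gpdf (y i) (μ h i) (S h)) := by
    intro i s t
    rw [sum_comp_update_update (fun l ν T => w l * gpdf (y i) (ν + (X i)ᵀ *ᵥ β) T) lam S hkh,
      add_right_comm (lam k), add_right_comm (lam h)]
  simp only [hsplit]
  rw [deriv_deriv_sum_log_add (fun i => hgpdf k i dlk (unvech dvk))
    (fun i => hgpdf h i dlh (unvech dvh)) (fun i => by simpa using (hm_pos i).ne')]
  congr 1
  refine Finset.sum_congr rfl fun i _ => ?_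
  rw [hα k i, hα h i, hc k i, hc h i, hb k i, hb h i, sumElim_dotProduct_sumElim_dup,
    sumElim_dotProduct_sumElim_dup]
  simp only [zero_smul, add_zero, hμ, hm]
  ring

/-- cross Hessian block between distinct component parameters `θ_k`, `θ_h`:
`∂²l/∂θ_k∂θ_h' = −∑ᵢ α_{ki} α_{hi} c_{ki} c_{hi}'`. -/
theorem stmt_12 (D P K I : ℕ) (w : Fin K → ℝ) (hw : ∀ k', 0 < w k') (hws : ∑ k', w k' = 1)
    (lam : Fin K → Fin D → ℝ) (S : Fin K → Matrix (Fin D) (Fin D) ℝ)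
    (hS : ∀ k', (S k').PosDef)
    (β : Fin P → ℝ) (X : Fin I → Matrix (Fin P) (Fin D) ℝ) (y : Fin I → Fin D → ℝ)
    (k h : Fin K) (hkh : k ≠ h)
    (α : Fin K → Fin I → ℝ)
    (hα : ∀ k' i, α k' i =
      w k' * gpdf (y i) (lam k' + (X i)ᵀ *ᵥ β) (S k') /
        ∑ l, w l * gpdf (y i) (lam l + (X i)ᵀ *ᵥ β) (S l))
    (b : Fin K → Fin I → Fin D → ℝ)
    (hb : ∀ k' i, b k' i = (S k')⁻¹ *ᵥ (y i - (lam k' + (X i)ᵀ *ᵥ β)))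
    (c : Fin K → Fin I → (Fin D ⊕ lowIdx D) → ℝ)
    (hc : ∀ k' i, c k' i = Sum.elim (b k' i)
      (fun q => (-(1 / 2 : ℝ)) *
        (((dup D)ᵀ *ᵥ vecM ((S k')⁻¹ - vecMulVec (b k' i) (b k' i))) q)))
    (dlk dlh : Fin D → ℝ) (dvk dvh : lowIdx D → ℝ) :
    deriv (fun t : ℝ => deriv (fun s : ℝ =>
      ∑ i, Real.log (∑ k', w k' * gpdf (y i)
        ((Function.update (Function.update lam k (lam k + s • dlk)) h
            (lam h + t • dlh)) k' + (X i)ᵀ *ᵥ β)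
        ((Function.update (Function.update S k (S k + s • unvech dvk)) h
            (S h + t • unvech dvh)) k'))) 0) 0 =
      -(∑ i, α k i * α h i *
        ((c k i ⬝ᵥ Sum.elim dlk dvk) * (c h i ⬝ᵥ Sum.elim dlh dvh))) :=
  stmt_12_general D P K I w hw lam S hS β X y k h hkh α hα b hb c hc dlk dlh dvk dvh
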